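/- arXiv:1003.2124 — 2 statements merged into one kernel-verified Lean document; each statement's English description precedes it below -/
import Mathlib

section
/- If α is an impure inverting composition of length n, then α − (1,1,…,1) (subtracting 1 from every part, deleting resulting zero parts) is a pure inverting composition. -/
/-- The largest part of a composition (0 for the empty composition). -/
def maxPart (α : List ℕ) : ℕ := α.foldr max 0

/-- A composition: a list of positive integers. -/
def IsComposition (α : List ℕ) : Prop := ∀ x ∈ α, 0 < x

/-- A composition is inverting if for each `i > 1` not exceeding the largest part,
there are indices `s < t` with `α_s = i` and `α_t = i - 1`. -/
def Inverting (α : List ℕ) : Prop :=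
  ∀ i, 1 < i → i ≤ maxPart α →
    ∃ s t, s < t ∧ t < α.length ∧ α.getD s 0 = i ∧ α.getD t 0 = i - 1

/-- The word `k^{e_{k-1}} ⋯ 2^{e_1} 1^{e_0}`, where `e_j` is the exponent of the value `j+1`. -/
def suffixWord (k : ℕ) (e : List ℕ) : List ℕ :=
  ((List.range k).reverse.map (fun j => List.replicate (e.getD j 0) (j + 1))).flatten

/-- `α = γ · k^{i_k} ⋯ 2^{i_2} 1^{i_1}` with all exponents `≥ 1` and `γ` containing
none of the values `1, …, k`. -/
def IsFactorization (α : List ℕ) (k : ℕ) (γ e : List ℕ) : Prop :=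
  e.length = k ∧ (∀ x ∈ e, 1 ≤ x) ∧ (∀ v ∈ γ, ¬(1 ≤ v ∧ v ≤ k)) ∧
  α = γ ++ suffixWord k e

/-- A factorization as above in which `k` is maximal. -/
def MaxFactorization (α : List ℕ) (k : ℕ) (γ e : List ℕ) : Prop :=
  IsFactorization α k γ e ∧ ∀ k' γ' e', IsFactorization α k' γ' e' → k' ≤ k

/-- A composition is pure if the maximal `k` in its factorization is even. -/
def PureComp (α : List ℕ) : Prop := ∃ k γ e, MaxFactorization α k γ e ∧ Even k

/-!
Subtracting one from every part lowers each value by one and deletes exactly the parts equal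
to `1`. An inversion `i + 1, …, i` of `α` thus becomes an inversion `i, …, i - 1`. The tail
`k^{i_k} ⋯ 2^{i_2} 1^{i_1}` of a factorization of `α` becomes `(k-1)^{i_k} ⋯ 1^{i_2}`, and
conversely every factorization of the new composition lifts back to one of `α` by adding one
to every part and reappending `1^{i_1}`. So the maximal `k` drops by exactly one, and an odd
maximal `k` becomes even.
-/

def subOne (α : List ℕ) : List ℕ := (α.map (fun x => x - 1)).filter (fun x => decide (0 < x))

theorem mem_subOne {x : ℕ} {α : List ℕ} : x ∈ subOne α ↔ 0 < x ∧ x + 1 ∈ α := by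
  simp only [subOne, List.mem_filter, List.mem_map, decide_eq_true_eq]
  constructor
  · rintro ⟨⟨y, hy, rfl⟩, hpos⟩
    exact ⟨hpos, by rwa [Nat.sub_add_cancel (by omega)]⟩
  · rintro ⟨hpos, hx⟩
    exact ⟨⟨x + 1, hx, rfl⟩, hpos⟩

theorem isComposition_subOne (α : List ℕ) : IsComposition (subOne α) :=
  fun _ hx => (mem_subOne.1 hx).1

theorem List.Sublist.subOne {l₁ l₂ : List ℕ} (h : l₁.Sublist l₂) :
    (_root_.subOne l₁).Sublist (_root_.subOne l₂) :=
  (h.map _).filter _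

theorem subOne_append (l₁ l₂ : List ℕ) : subOne (l₁ ++ l₂) = subOne l₁ ++ subOne l₂ := by
  simp only [subOne, List.map_append, List.filter_append]

theorem subOne_replicate_one (m : ℕ) : subOne (List.replicate m 1) = [] := by
  simp [subOne, List.map_replicate]

theorem subOne_map_add_one {l : List ℕ} (hl : IsComposition l) :
    subOne (l.map (· + 1)) = l := by
  rw [subOne, List.map_map]
  simpa [Function.comp_def, IsComposition] using hl

theorem subOne_of_two_le {l : List ℕ} (hl : ∀ x ∈ l, 2 ≤ x) : subOne l = l.map (· - 1) := by
  refine List.filter_eq_self.2 fun x hx => ?_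
  obtain ⟨y, hy, rfl⟩ := List.mem_map.1 hx
  have := hl y hy
  simp only [decide_eq_true_eq]
  omega

theorem map_add_one_map_sub_one {l : List ℕ} (hl : IsComposition l) :
    (l.map (· - 1)).map (· + 1) = l := by
  rw [List.map_map]
  exact (List.map_congr_left fun x hx => Nat.sub_add_cancel (hl x hx)).trans (List.map_id l)

theorem le_maxPart_iff {m : ℕ} {l : List ℕ} (hm : 0 < m) : m ≤ maxPart l ↔ ∃ x ∈ l, m ≤ x := by
  induction l with
  | nil => simp [maxPart]; omega
  | cons c l ih =>
    change m ≤ max c (maxPart l) ↔ _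
    rw [le_max_iff, ih, List.exists_mem_cons_iff]

theorem List.pair_sublist_iff_getD {α : Type*} {a b d : α} {l : List α} :
    [a, b].Sublist l ↔ ∃ s t, s < t ∧ t < l.length ∧ l.getD s d = a ∧ l.getD t d = b := by
  induction l with
  | nil => simp
  | cons c l ih =>
    constructor
    · intro h
      cases h with
      | cons _ h =>
        obtain ⟨s, t, hst, htl, hs, ht⟩ := ih.1 h
        exact ⟨s + 1, t + 1, by omega, by simpa using htl, hs, ht⟩
      | cons_cons _ h =>
        obtain ⟨t, htl, ht⟩ := List.getElem_of_mem (List.singleton_sublist.1 h)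
        exact ⟨0, t + 1, by omega, by simpa using htl, rfl, by simpa [htl] using ht⟩
    · rintro ⟨s | s, t | t, hst, htl, hs, ht⟩
      · omega
      · obtain rfl : c = a := hs
        have htl' : t < l.length := by simpa using htl
        refine (List.singleton_sublist.2 ?_).cons_cons c
        rw [List.getD_cons_succ, List.getD_eq_getElem _ _ htl'] at ht
        exact ht ▸ List.getElem_mem htl'
      · omega
      · exact (ih.2 ⟨s, t, by omega, by simpa using htl, hs, ht⟩).cons c

theorem inverting_iff_pair_sublist {α : List ℕ} :
    Inverting α ↔ ∀ i, 1 < i → i ≤ maxPart α → [i, i - 1].Sublist α := by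
  simp only [Inverting, List.pair_sublist_iff_getD (d := 0)]

theorem Inverting.subOne {α : List ℕ} (h : Inverting α) : Inverting (subOne α) := by
  rw [inverting_iff_pair_sublist] at h ⊢
  intro i hi him
  obtain ⟨x, hx, hix⟩ := (le_maxPart_iff (by omega)).1 him
  have hpair : [i + 1, i].Sublist α :=
    h (i + 1) (by omega) ((le_maxPart_iff (by omega)).2 ⟨x + 1, (mem_subOne.1 hx).2, by omega⟩)
  have hshift : _root_.subOne [i + 1, i] = [i, i - 1] := by
    simp [_root_.subOne]
    omega
  exact hshift ▸ hpair.subOne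

theorem suffixWord_succ (k : ℕ) (e : List ℕ) :
    suffixWord (k + 1) e = List.replicate (e.getD k 0) (k + 1) ++ suffixWord k e := by
  simp [suffixWord, List.range_succ]

theorem mem_suffixWord {x k : ℕ} {e : List ℕ} (h : x ∈ suffixWord k e) : 1 ≤ x ∧ x ≤ k := by
  induction k with
  | zero => simp [suffixWord] at h
  | succ k ih =>
    rcases List.mem_append.1 (suffixWord_succ k e ▸ h) with h | h
    · obtain rfl := List.eq_of_mem_replicate h
      omega
    · have := ih h
      omega

theorem le_length_suffixWord {k : ℕ} {e : List ℕ} (hk : k ≤ e.length) (he : ∀ x ∈ e, 1 ≤ x) :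
    k ≤ (suffixWord k e).length := by
  induction k with
  | zero => simp
  | succ k ih =>
    have hek : 1 ≤ e.getD k 0 := by
      rw [List.getD_eq_getElem e 0 (by omega)]
      exact he _ (List.getElem_mem _)
    rw [suffixWord_succ, List.length_append, List.length_replicate]
    have := ih (by omega)
    omega

theorem map_add_one_suffixWord_append (k : ℕ) (e : List ℕ) (m : ℕ) :
    (suffixWord k e).map (· + 1) ++ List.replicate m 1 = suffixWord (k + 1) (m :: e) := by
  induction k with
  | zero => simp [suffixWord]
  | succ k ih =>
    rw [suffixWord_succ k e, List.map_append, List.map_replicate, List.append_assoc, ih,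
      suffixWord_succ (k + 1) (m :: e)]
    simp

theorem IsFactorization.le_length {α γ e : List ℕ} {k : ℕ} (h : IsFactorization α k γ e) :
    k ≤ α.length := by
  obtain ⟨hlen, hpos, -, rfl⟩ := h
  have := le_length_suffixWord hlen.ge hpos
  simp only [List.length_append]
  omega

theorem exists_maxFactorization (α : List ℕ) : ∃ k γ e, MaxFactorization α k γ e := by
  classical
  let P k := ∃ γ e, IsFactorization α k γ e
  have hP0 : P 0 := ⟨α, [], rfl, by simp, by omega, by simp [suffixWord]⟩
  obtain ⟨γ, e, h⟩ : P (Nat.findGreatest P α.length) := Nat.findGreatest_spec (Nat.zero_le _) hP0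
  exact ⟨_, γ, e, h, fun k' γ' e' h' => Nat.le_findGreatest h'.le_length ⟨γ', e', h'⟩⟩

theorem IsFactorization.lift {β γ e : List ℕ} {k m : ℕ} (hβ : IsComposition β) (hm : 1 ≤ m)
    (h : IsFactorization β k γ e) :
    IsFactorization (β.map (· + 1) ++ List.replicate m 1) (k + 1) (γ.map (· + 1)) (m :: e) := by
  obtain ⟨hlen, hpos, hγ, rfl⟩ := h
  refine ⟨by simp [hlen], ?_, ?_, ?_⟩
  · simpa [hm] using hpos
  · simp only [List.mem_map]
    rintro _ ⟨v, hv, rfl⟩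
    have := hβ v (List.mem_append_left _ hv)
    have := hγ v hv
    omega
  · rw [List.map_append, List.append_assoc, map_add_one_suffixWord_append]

theorem MaxFactorization.subOne {α γ e : List ℕ} {k m : ℕ} (hα : IsComposition α)
    (h : MaxFactorization α (k + 1) γ (m :: e)) :
    MaxFactorization (_root_.subOne α) k (γ.map (· - 1)) e := by
  obtain ⟨⟨hlen, hpos, hγ, hαeq⟩, hmax⟩ := h
  have hγ2 : ∀ v ∈ γ, k + 2 ≤ v := fun v hv => by
    have := hα v (hαeq ▸ List.mem_append_left _ hv)
    have := hγ v hv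
    omega
  have hsub : _root_.subOne α = γ.map (· - 1) ++ suffixWord k e := by
    rw [hαeq, ← map_add_one_suffixWord_append, subOne_append, subOne_append,
      subOne_of_two_le fun v hv => by have := hγ2 v hv; omega,
      subOne_map_add_one fun x hx => (mem_suffixWord hx).1, subOne_replicate_one, List.append_nil]
  have hlift : (_root_.subOne α).map (· + 1) ++ List.replicate m 1 = α := by
    rw [hsub, List.map_append, List.append_assoc, map_add_one_suffixWord_append,
      map_add_one_map_sub_one fun v hv => by have := hγ2 v hv; omega, hαeq]
  refine ⟨⟨by simpa using hlen, fun x hx => hpos x (List.mem_cons_of_mem _ hx), ?_, hsub⟩, ?_⟩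
  · simp only [List.mem_map]
    rintro _ ⟨v, hv, rfl⟩
    have := hγ2 v hv
    omega
  · intro k' γ' e' h'
    have := hmax _ _ _ (hlift ▸ h'.lift (isComposition_subOne α) (hpos m List.mem_cons_self))
    omega

theorem impure_sub_one_general (α : List ℕ)
    (hc : IsComposition α) (hinv : Inverting α) (himp : ¬ PureComp α) :
    IsComposition ((α.map (fun x => x - 1)).filter (fun x => decide (0 < x))) ∧
    Inverting ((α.map (fun x => x - 1)).filter (fun x => decide (0 < x))) ∧
    PureComp ((α.map (fun x => x - 1)).filter (fun x => decide (0 < x))) := by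
  refine ⟨isComposition_subOne α, hinv.subOne, ?_⟩
  obtain ⟨K, γ, e, hmax⟩ := exists_maxFactorization α
  have hodd : ¬Even K := fun hK => himp ⟨K, γ, e, hmax, hK⟩
  obtain ⟨k, rfl⟩ : ∃ k, K = k + 1 :=
    Nat.exists_eq_add_one.2 (Nat.pos_of_ne_zero fun hK => hodd (hK ▸ Even.zero))
  obtain ⟨m, e, rfl⟩ := List.exists_cons_of_length_eq_add_one hmax.1.1
  exact ⟨k, _, e, hmax.subOne hc, by simpa [Nat.even_add_one] using hodd⟩

/-- If `α` is an impure inverting composition of length `n`, then subtracting `1` from every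
part and deleting zero parts yields a pure inverting composition. -/
theorem impure_sub_one (n : ℕ) (α : List ℕ) (hlen : α.length = n)
    (hc : IsComposition α) (hinv : Inverting α) (himp : ¬ PureComp α) :
    IsComposition ((α.map (fun x => x - 1)).filter (fun x => decide (0 < x))) ∧
    Inverting ((α.map (fun x => x - 1)).filter (fun x => decide (0 < x))) ∧
    PureComp ((α.map (fun x => x - 1)).filter (fun x => decide (0 < x))) :=
  impure_sub_one_general α hc hinv himp
end

section
/- In a composition tableau T of shape α whose content γ satisfies λ(α) = λ(γ), every row i of maximal length l is filled entirely with the entry i. -/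
/-- (CT1) Rows of the filling weakly decrease from left to right. -/
def RowsDecrease (α : List ℕ) (T : ℕ → ℕ → ℕ) : Prop :=
  ∀ i j, i < α.length → j + 1 < α.getD i 0 → T i (j + 1) ≤ T i j

/-- (CT2) The leftmost column strictly increases from top to bottom. -/
def FirstColIncr (α : List ℕ) (T : ℕ → ℕ → ℕ) : Prop :=
  ∀ i₁ i₂, i₁ < i₂ → i₂ < α.length → T i₁ 0 < T i₂ 0

/-- (CT3) The triple rule, for cells `(i,c)` and `(j,c)` in the same column with `i < j`
(rows and columns 0-indexed). -/
def TripleRule (α : List ℕ) (T : ℕ → ℕ → ℕ) : Prop :=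
  ∀ i j c, i < j → j < α.length → c < α.getD i 0 → c < α.getD j 0 →
    (α.getD j 0 ≤ α.getD i 0 → 1 ≤ c → (T j c < T i c ∨ T i (c - 1) < T j c)) ∧
    (α.getD i 0 < α.getD j 0 → (T j c < T i c ∨ T i c < T j (c + 1)))

/-- A composition tableau of shape `α`: positive entries in the cells of the diagram of `α`
(and `0` outside), satisfying (CT1), (CT2) and the triple rule (CT3). -/
def IsCompTableau (α : List ℕ) (T : ℕ → ℕ → ℕ) : Prop :=
  (∀ i j, i < α.length → j < α.getD i 0 → 0 < T i j) ∧
  (∀ i j, α.length ≤ i ∨ α.getD i 0 ≤ j → T i j = 0) ∧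
  RowsDecrease α T ∧ FirstColIncr α T ∧ TripleRule α T

/-- The number of cells of the tableau containing the value `v`. -/
def contentCount (α : List ℕ) (T : ℕ → ℕ → ℕ) (v : ℕ) : ℕ :=
  ∑ i ∈ Finset.range α.length, ((Finset.range (α.getD i 0)).filter (fun j => T i j = v)).card

/-- The tableau has content `γ`: each value `v ≥ 1` occurs `γ_v` times. -/
def HasContent (α : List ℕ) (T : ℕ → ℕ → ℕ) (γ : List ℕ) : Prop :=
  ∀ v, 1 ≤ v → contentCount α T v = γ.getD (v - 1) 0

/-!
Let `l` be the largest part of `α` and `n` its number of parts. Since `γ` has `n` parts, every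
entry is at most `n`, so the strictly increasing first column reads `1, …, n` and row `i` has
entries at most `i + 1`. The triple rule makes columns injective, so a value occurs at most `l`
times, and a value `k + 1` occurring exactly `l` times (a *full* value, i.e. `γ_k = l`) occurs once
in each of the columns `0, …, l - 1`. Again by the triple rule these occurrences move weakly upwards
from left to right; starting in row `k`, the occurrence in column `l - 1` lies in a row `r ≤ k`
of length `l`, and `k + 1 ≤ r + 1` forces `r = k`. Hence every `k` with `γ_k = l` indexes a row of
maximal length whose last entry is `k + 1`; as `λ(α) = λ(γ)` there are as many full values as rows
of maximal length, so every such row `i` ends in `i + 1`, and then it is constant since it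
decreases weakly from `T i 0 = i + 1`.
-/

open Finset

theorem List.card_filter_range_getD_eq_count (L : List ℕ) (a : ℕ) :
    #{k ∈ Finset.range L.length | L.getD k 0 = a} = L.count a := by
  rw [card_filter]
  induction L with
  | nil => simp
  | cons b L ih =>
    rw [List.length_cons, Finset.sum_range_succ', List.count_cons, ← ih]
    by_cases hb : b = a <;> simp [hb]

theorem getD_le_maxPart (α : List ℕ) (i : ℕ) : α.getD i 0 ≤ maxPart α := by
  rcases lt_or_ge i α.length with hi | hi
  · rw [α.getD_eq_getElem 0 hi]
    exact List.le_max_of_le' 0 (List.getElem_mem hi) le_rfl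
  · rw [List.getD_eq_default _ _ hi]
    exact Nat.zero_le _

theorem IsComposition.getD_pos {α : List ℕ} (hα : IsComposition α) {i : ℕ} (hi : i < α.length) :
    0 < α.getD i 0 := by
  rw [α.getD_eq_getElem 0 hi]
  exact hα _ (List.getElem_mem hi)

def colOccurrences (α : List ℕ) (T : ℕ → ℕ → ℕ) (v c : ℕ) : Finset ℕ :=
  {r ∈ range α.length | c < α.getD r 0 ∧ T r c = v}

theorem contentCount_eq_sum_card_colOccurrences (α : List ℕ) (T : ℕ → ℕ → ℕ) (v : ℕ) :
    contentCount α T v = ∑ c ∈ range (maxPart α), #(colOccurrences α T v c) := by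
  have hrow : ∀ r, #{c ∈ range (α.getD r 0) | T r c = v} =
      ∑ c ∈ range (maxPart α), if c < α.getD r 0 ∧ T r c = v then 1 else 0 := by
    intro r
    rw [← card_filter]
    congr 1
    ext c
    simp only [mem_filter, mem_range]
    exact ⟨fun h => ⟨h.1.trans_le (getD_le_maxPart α r), h⟩, fun h => h.2⟩
  simp only [contentCount, hrow, colOccurrences, card_filter]
  exact sum_comm

variable {α γ : List ℕ} {T : ℕ → ℕ → ℕ}

theorem RowsDecrease.antitone (h : RowsDecrease α T) {i j j' : ℕ} (hi : i < α.length)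
    (hjj' : j ≤ j') (hj' : j' < α.getD i 0) : T i j' ≤ T i j := by
  induction j', hjj' using Nat.le_induction with
  | base => exact le_rfl
  | succ m _ ih => exact (h i m hi hj').trans (ih (by omega))

theorem FirstColIncr.add_le (h : FirstColIncr α T) {i d : ℕ} (hid : i + d < α.length) :
    T i 0 + d ≤ T (i + d) 0 := by
  induction d with
  | zero => exact le_rfl
  | succ d ih => have := h (i + d) (i + d + 1) (by omega) hid; grind

namespace IsCompTableau

theorem entry_le_length (hT : IsCompTableau α T) (hc : HasContent α T γ)
    (hlen : γ.length ≤ α.length) {i j : ℕ} (hi : i < α.length) (hj : j < α.getD i 0) :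
    T i j ≤ α.length := by
  have hpos := hT.1 i j hi hj
  have hcount : 0 < contentCount α T (T i j) :=
    sum_pos' (fun _ _ => Nat.zero_le _)
      ⟨i, mem_range.2 hi, card_pos.2 ⟨j, mem_filter.2 ⟨mem_range.2 hj, rfl⟩⟩⟩
  rw [hc _ hpos] at hcount
  by_contra hlt
  rw [List.getD_eq_default _ _ (by omega)] at hcount
  exact hcount.false

theorem firstCol_eq (hα : IsComposition α) (hT : IsCompTableau α T) (hc : HasContent α T γ)
    (hlen : γ.length ≤ α.length) {i : ℕ} (hi : i < α.length) : T i 0 = i + 1 := by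
  have hcol := hT.2.2.2.1
  have hlast : α.length - 1 < α.length := by omega
  have hlower := hcol.add_le (i := 0) (d := i) (by omega)
  have hupper := hcol.add_le (i := i) (d := α.length - 1 - i) (by omega)
  have htop := hT.1 0 0 (by omega) (hα.getD_pos (by omega))
  have hbot := hT.entry_le_length hc hlen hlast (hα.getD_pos hlast)
  rw [show i + (α.length - 1 - i) = α.length - 1 by omega] at hupper
  rw [zero_add] at hlower
  omega

theorem ne_of_row_lt (hT : IsCompTableau α T) {i j c : ℕ} (hij : i < j) (hj : j < α.length)
    (hci : c < α.getD i 0) (hcj : c < α.getD j 0) : T i c ≠ T j c := by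
  obtain ⟨-, hzero, hrow, hcol, htri⟩ := hT
  intro heq
  rcases Nat.eq_zero_or_pos c with rfl | hc
  · exact absurd heq (hcol i j hij hj).ne
  obtain ⟨hweak, hstrict⟩ := htri i j c hij hj hci hcj
  rcases le_or_gt (α.getD j 0) (α.getD i 0) with hle | hlt
  · have := hrow i (c - 1) (by omega) (by omega)
    rw [Nat.sub_add_cancel hc] at this
    rcases hweak hle hc with h | h <;> omega
  · have : T j (c + 1) ≤ T j c := by
      rcases lt_or_ge (c + 1) (α.getD j 0) with h | h
      · exact hrow j c hj h
      · rw [hzero j (c + 1) (Or.inr h)]; exact Nat.zero_le _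
    rcases hstrict hlt with h | h <;> omega

theorem card_colOccurrences_le_one (hT : IsCompTableau α T) (v c : ℕ) :
    #(colOccurrences α T v c) ≤ 1 := by
  refine card_le_one.2 fun a ha b hb => ?_
  simp only [colOccurrences, mem_filter, mem_range] at ha hb
  by_contra hab
  rcases Nat.lt_or_gt_of_ne hab with hab | hab
  · exact hT.ne_of_row_lt hab hb.1 ha.2.1 hb.2.1 (ha.2.2.trans hb.2.2.symm)
  · exact hT.ne_of_row_lt hab ha.1 hb.2.1 ha.2.1 (hb.2.2.trans ha.2.2.symm)

theorem colOccurrences_nonempty (hT : IsCompTableau α T) {v c : ℕ}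
    (hv : contentCount α T v = maxPart α) (hc : c < maxPart α) :
    (colOccurrences α T v c).Nonempty := by
  by_contra hempty
  rw [not_nonempty_iff_eq_empty] at hempty
  have hlt : ∑ c' ∈ range (maxPart α), #(colOccurrences α T v c') < ∑ _c' ∈ range (maxPart α), 1 :=
    sum_lt_sum (fun c' _ => hT.card_colOccurrences_le_one v c')
      ⟨c, mem_range.2 hc, by simp [hempty]⟩
  rw [← contentCount_eq_sum_card_colOccurrences, hv, sum_const, card_range, smul_eq_mul,
    mul_one] at hlt
  exact hlt.false

theorem row_le_of_next_col_eq (hT : IsCompTableau α T) {r j c : ℕ} (hr : r < α.length)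
    (hcr : c < α.getD r 0) (hj : j < α.length) (hcj : c + 1 < α.getD j 0)
    (heq : T j (c + 1) = T r c) : j ≤ r := by
  by_contra! hrj
  have hne := hT.ne_of_row_lt hrj hj hcr (by omega)
  obtain ⟨-, -, hrow, -, htri⟩ := hT
  have hj_dec := hrow j c hj hcj
  rcases le_or_gt (α.getD j 0) (α.getD r 0) with hle | hlt
  · have hr_dec := hrow r c hr (by omega)
    rcases (htri r j (c + 1) hrj hj (by omega) hcj).1 hle (by omega) with h | h
    · omega
    · rw [Nat.add_sub_cancel] at h; omega
  · rcases (htri r j c hrj hj hcr (by omega)).2 hlt with h | h <;> omega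

theorem row_le_of_contentCount_eq_maxPart (hT : IsCompTableau α T)
    (hfc : ∀ i < α.length, T i 0 = i + 1) {k : ℕ} (hk : contentCount α T (k + 1) = maxPart α) :
    ∀ c < maxPart α, ∀ r < α.length, c < α.getD r 0 → T r c = k + 1 → r ≤ k := by
  intro c
  induction c with
  | zero => intro _ r hr _ hTr; have := hfc r hr; omega
  | succ c ih =>
    intro hc r hr hcr hTr
    obtain ⟨s, hs⟩ := hT.colOccurrences_nonempty hk (c := c) (by omega)
    simp only [colOccurrences, mem_filter, mem_range] at hs
    have hsk := ih (by omega) s hs.1 hs.2.1 hs.2.2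
    have hrs := hT.row_le_of_next_col_eq hs.1 hs.2.1 hr hcr (hTr.trans hs.2.2.symm)
    omega

theorem last_eq_of_contentCount_eq_maxPart (hT : IsCompTableau α T)
    (hfc : ∀ i < α.length, T i 0 = i + 1) {k : ℕ} (hk : contentCount α T (k + 1) = maxPart α)
    (hl : 0 < maxPart α) : α.getD k 0 = maxPart α ∧ T k (maxPart α - 1) = k + 1 := by
  obtain ⟨r, hr⟩ := hT.colOccurrences_nonempty hk (c := maxPart α - 1) (by omega)
  simp only [colOccurrences, mem_filter, mem_range] at hr
  obtain ⟨hrn, hcr, hTr⟩ := hr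
  have hrk := hT.row_le_of_contentCount_eq_maxPart hfc hk _ (by omega) r hrn hcr hTr
  have hkr : T r (maxPart α - 1) ≤ T r 0 := hT.2.2.1.antitone hrn (Nat.zero_le _) hcr
  have hlen := getD_le_maxPart α r
  have hr0 := hfc r hrn
  obtain rfl : r = k := by omega
  exact ⟨by omega, hTr⟩

end IsCompTableau

theorem max_row_filled_general (α γ : List ℕ) (T : ℕ → ℕ → ℕ)
    (hα : IsComposition α)
    (hT : IsCompTableau α T) (hc : HasContent α T γ)
    (h : (α : Multiset ℕ) = (γ : Multiset ℕ)) :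
    ∀ i, i < α.length → α.getD i 0 = maxPart α →
      ∀ j, j < α.getD i 0 → T i j = i + 1 := by
  intro i hi hmax j hj
  have hlen : γ.length = α.length := by simpa using (congrArg Multiset.card h).symm
  have hfc : ∀ r < α.length, T r 0 = r + 1 := fun r hr => hT.firstCol_eq hα hc hlen.le hr
  have hl : 0 < maxPart α := by omega
  have hfull : ∀ k, γ.getD k 0 = maxPart α → contentCount α T (k + 1) = maxPart α :=
    fun k hk => (hc (k + 1) (by omega)).trans hk
  have hcard : #{r ∈ range α.length | α.getD r 0 = maxPart α} =
      #{k ∈ range α.length | γ.getD k 0 = maxPart α} := by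
    rw [List.card_filter_range_getD_eq_count, ← hlen, List.card_filter_range_getD_eq_count]
    simpa using congrArg (Multiset.count (maxPart α)) h
  have hfull_eq : {k ∈ range α.length | γ.getD k 0 = maxPart α} =
      {r ∈ range α.length | α.getD r 0 = maxPart α} := by
    refine eq_of_subset_of_card_le (fun k hk => ?_) hcard.le
    rw [mem_filter] at hk ⊢
    exact ⟨hk.1, (hT.last_eq_of_contentCount_eq_maxPart hfc (hfull k hk.2) hl).1⟩
  have hiγ : γ.getD i 0 = maxPart α := by
    have : i ∈ {k ∈ range α.length | γ.getD k 0 = maxPart α} := by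
      rw [hfull_eq]; exact mem_filter.2 ⟨mem_range.2 hi, hmax⟩
    exact (mem_filter.1 this).2
  have hlast := (hT.last_eq_of_contentCount_eq_maxPart hfc (hfull i hiγ) hl).2
  have hle_first := hT.2.2.1.antitone hi (Nat.zero_le j) hj
  have hge_last := hT.2.2.1.antitone hi (Nat.le_sub_one_of_lt (hmax ▸ hj)) (by omega)
  have := hfc i hi
  omega

/-- In a composition tableau of shape `α` with content `γ` satisfying `λ(α) = λ(γ)`,
every row of maximal length is filled entirely with its (1-indexed) row number. -/
theorem max_row_filled (α γ : List ℕ) (T : ℕ → ℕ → ℕ)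
    (hα : IsComposition α) (hγ : IsComposition γ)
    (hT : IsCompTableau α T) (hc : HasContent α T γ)
    (h : (α : Multiset ℕ) = (γ : Multiset ℕ)) :
    ∀ i, i < α.length → α.getD i 0 = maxPart α →
      ∀ j, j < α.getD i 0 → T i j = i + 1 :=
  max_row_filled_general α γ T hα hT hc h
end
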